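/- arXiv:2510.23612 — 6 statements merged into one kernel-verified Lean document; each statement's English description precedes it below -/
import Mathlib

section
/- Let B be a Bol algebra over a field k of characteristic different from 2 and 3, let V be a k-vector space, let μ: B → gl(V) be a linear map and θ, D: B×B → gl(V) bilinear maps. Then (V,μ,θ,D) is a representation of B if and only if the space B ⊕ V with the operations (x+u)*(y+v) = x*y + μ(x)v − μ(y)u and [x+u, y+v, z+w] = [x,y,z] + θ(y,z)u − θ(x,z)v + D(x,y)w (for x,y,z ∈ B, u,v,w ∈ V) is a Bol algebra. -/
/-- A map of two arguments that is `k`-linear in each argument. -/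
def IsBilinMap (k : Type*) [Field k] {M N P : Type*} [AddCommGroup M] [Module k M]
    [AddCommGroup N] [Module k N] [AddCommGroup P] [Module k P]
    (f : M → N → P) : Prop :=
  (∀ x, IsLinearMap k (f x)) ∧ (∀ y, IsLinearMap k (fun x => f x y))

/-- A map of three arguments that is `k`-linear in each argument. -/
def IsTrilinMap (k : Type*) [Field k] {M N P Q : Type*} [AddCommGroup M] [Module k M]
    [AddCommGroup N] [Module k N] [AddCommGroup P] [Module k P] [AddCommGroup Q] [Module k Q]
    (f : M → N → P → Q) : Prop :=
  (∀ x y, IsLinearMap k (f x y)) ∧ (∀ x z, IsLinearMap k (fun y => f x y z)) ∧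
    (∀ y z, IsLinearMap k (fun x => f x y z))

/-- A Bol algebra structure: a bilinear product `mul`, a trilinear bracket `tri`,
satisfying the Bol algebra axioms. -/
def IsBolAlg (k : Type*) [Field k] {B : Type*} [AddCommGroup B] [Module k B]
    (mul : B → B → B) (tri : B → B → B → B) : Prop :=
  IsBilinMap k mul ∧ IsTrilinMap k tri ∧
  (∀ x y, mul x y = - mul y x) ∧
  (∀ x y z, tri x y z = - tri y x z) ∧
  (∀ x y z, tri x y z + tri y z x + tri z x y = 0) ∧
  (∀ x1 x2 y1 y2, tri x1 x2 (mul y1 y2)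
      = mul (tri x1 x2 y1) y2 + mul y1 (tri x1 x2 y2) + tri y1 y2 (mul x1 x2)
        - mul (mul y1 y2) (mul x1 x2)) ∧
  (∀ x1 x2 y1 y2 y3, tri x1 x2 (tri y1 y2 y3)
      = tri (tri x1 x2 y1) y2 y3 + tri y1 (tri x1 x2 y2) y3 + tri y1 y2 (tri x1 x2 y3))

/-- A homomorphism of Bol algebras: a linear map preserving both operations. -/
def IsBolHom (k : Type*) [Field k] {B1 B2 : Type*} [AddCommGroup B1] [Module k B1]
    [AddCommGroup B2] [Module k B2]
    (mul1 : B1 → B1 → B1) (tri1 : B1 → B1 → B1 → B1)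
    (mul2 : B2 → B2 → B2) (tri2 : B2 → B2 → B2 → B2) (f : B1 → B2) : Prop :=
  IsLinearMap k f ∧ (∀ x y, f (mul1 x y) = mul2 (f x) (f y)) ∧
    (∀ x y z, f (tri1 x y z) = tri2 (f x) (f y) (f z))

/-- A representation of a Bol algebra `(B, mulB, triB)` on a vector space `V`. -/
def IsBolRep (k : Type*) [Field k] {B V : Type*} [AddCommGroup B] [Module k B]
    [AddCommGroup V] [Module k V]
    (mulB : B → B → B) (triB : B → B → B → B)
    (μ : B → V → V) (θ : B → B → V → V) (D : B → B → V → V) : Prop :=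
  IsBilinMap k μ ∧ IsTrilinMap k θ ∧ IsTrilinMap k D ∧
  (∀ x1 x2 a, D x1 x2 a + θ x1 x2 a - θ x2 x1 a = 0) ∧
  (∀ x1 x2 y1 a, D x1 x2 (μ y1 a) - μ y1 (D x1 x2 a)
      = μ (triB x1 x2 y1) a - θ y1 (mulB x1 x2) a + μ (mulB x1 x2) (μ y1 a)) ∧
  (∀ x1 y1 y2 a, θ x1 (mulB y1 y2) a
      = μ y1 (θ x1 y2 a) - μ y2 (θ x1 y1 a) - D y1 y2 (μ x1 a) + μ (mulB y1 y2) (μ x1 a)) ∧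
  (∀ x1 x2 y1 y2 a, D x1 x2 (D y1 y2 a) - D y1 y2 (D x1 x2 a)
      = D (triB x1 x2 y1) y2 a + D y1 (triB x1 x2 y2) a) ∧
  (∀ x1 x2 y1 y2 a, D x1 x2 (θ y1 y2 a) - θ y1 y2 (D x1 x2 a)
      = θ (triB x1 x2 y1) y2 a + θ y1 (triB x1 x2 y2) a) ∧
  (∀ x1 y1 y2 y3 a, θ x1 (triB y1 y2 y3) a
      = θ y2 y3 (θ x1 y1 a) - θ y1 y3 (θ x1 y2 a) + D y1 y2 (θ x1 y3 a))

/-- A non-abelian (2,3)-cocycle on the Bol algebra `B` with values in the Bol algebra `V`. -/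
structure IsNACocycle (k : Type*) [Field k] {B V : Type*} [AddCommGroup B] [Module k B]
    [AddCommGroup V] [Module k V]
    (mulB : B → B → B) (triB : B → B → B → B)
    (mulV : V → V → V) (triV : V → V → V → V)
    (ν : B → B → V) (ω : B → B → B → V)
    (μ : B → V → V) (θ : B → B → V → V) (D : B → B → V → V) : Prop where
  ν_bilin : IsBilinMap k ν
  ν_skew : ∀ x y, ν x y = - ν y x
  ω_trilin : IsTrilinMap k ω
  ω_skew : ∀ x y z, ω x y z = - ω y x z
  μ_bilin : IsBilinMap k μ
  θ_trilin : IsTrilinMap k θ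
  D_trilin : IsTrilinMap k D
  D_skew : ∀ x y a, D x y a = - D y x a
  ω_cyclic : ∀ x y z, ω x y z + ω y z x + ω z x y = 0
  Dθ_rel : ∀ x y a, D x y a - θ y x a + θ x y a = 0
  eqB22 : ∀ x y z w, D x y (ν z w) + ω x y (mulB z w)
      = ν (triB x y z) w - μ w (ω x y z) + μ z (ω x y w) + ν z (triB x y w)
        + ω z w (mulB x y) + D z w (ν x y) - ν (mulB z w) (mulB x y)
        - μ (mulB x y) (ν x y) + μ (mulB x y) (ν z w)
  eqB23 : ∀ x y z a, D x y (μ z a) + θ z (mulB x y) a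
      = μ (triB x y z) a + mulV (ω x y z) a + μ z (D x y a) + μ (mulB x y) (μ z a)
  eqB24 : ∀ x y a b, D x y (mulV a b) + μ (mulB x y) (mulV a b)
      = mulV (D x y a) b + mulV a (D x y b) + triV a b (ν x y)
  eqB25 : ∀ x y a b, triV a b (ν x y) + D x y (mulV a b) + μ (mulB x y) (mulV a b) = 0
  eqB31 : ∀ x y z w a, θ x (triB y z w) a
      = θ z w (θ x y a) - θ y w (θ x z a) + D y z (θ x w a)
  eqB32 : ∀ x y z a, θ x (mulB y z) a
      = μ y (θ x z a) - μ z (θ x y a) - D y z (μ x a) + μ (mulB y z) (μ x a)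
  eqB2 : ∀ x y z w a, D x y (θ z w a) - θ z w (D x y a)
      = θ (triB x y z) w a + θ z (triB x y w) a
  eqB3 : ∀ x y z w a, D x y (D z w a) - D z w (D x y a)
      = D (triB x y z) w a + D z (triB x y w) a
  eqB4 : ∀ x y a b c, D x y (triV a b c)
      = triV (D x y a) b c + triV a (D x y b) c + triV a b (D x y c)
  eqB1 : ∀ x1 x2 y1 y2 y3, D x1 x2 (ω y1 y2 y3) + ω x1 x2 (triB y1 y2 y3)
      = ω (triB x1 x2 y1) y2 y3 + θ y2 y3 (ω x1 x2 y1) + ω y1 (triB x1 x2 y2) y3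
        - θ y1 y3 (ω x1 x2 y2) + ω y1 y2 (triB x1 x2 y3) + D y1 y2 (ω x1 x2 y3)

/-- Equivalence of two non-abelian (2,3)-cocycles via a linear map `φ : B → V`. -/
structure CocycleEquiv (k : Type*) [Field k] {B V : Type*} [AddCommGroup B] [Module k B]
    [AddCommGroup V] [Module k V]
    (mulB : B → B → B) (triB : B → B → B → B)
    (mulV : V → V → V) (triV : V → V → V → V)
    (ν1 : B → B → V) (ω1 : B → B → B → V) (μ1 : B → V → V)
    (θ1 : B → B → V → V) (D1 : B → B → V → V)
    (ν2 : B → B → V) (ω2 : B → B → B → V) (μ2 : B → V → V)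
    (θ2 : B → B → V → V) (D2 : B → B → V → V)
    (φ : B → V) : Prop where
  linear : IsLinearMap k φ
  eq_ω : ∀ x y z, ω1 x y z - ω2 x y z
      = θ2 x z (φ y) - D2 x y (φ z) - θ2 y z (φ x) - triV (φ x) (φ y) (φ z) + φ (triB x y z)
  eq_ν : ∀ x y, ν1 x y - ν2 x y
      = mulV (φ x) (φ y) + φ (mulB x y) - μ2 x (φ y) + μ2 y (φ x)
  eq_μ : ∀ x a, μ1 x a - μ2 x a = mulV a (φ x)
  eq_θ : ∀ x y a, θ1 x y a - θ2 x y a = triV a (φ x) (φ y)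
  eq_D : ∀ x y a, D1 x y a - D2 x y a = triV (φ x) (φ y) a

/-- A non-abelian extension `0 → V →(i) H →(p) B → 0` of Bol algebras:
a short exact sequence of Bol algebra homomorphisms. -/
def IsNAExt (k : Type*) [Field k] {V H B : Type*} [AddCommGroup V] [Module k V]
    [AddCommGroup H] [Module k H] [AddCommGroup B] [Module k B]
    (mulV : V → V → V) (triV : V → V → V → V)
    (mulH : H → H → H) (triH : H → H → H → H)
    (mulB : B → B → B) (triB : B → B → B → B)
    (i : V → H) (p : H → B) : Prop :=
  IsBolHom k mulV triV mulH triH i ∧ IsBolHom k mulH triH mulB triB p ∧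
    Function.Injective i ∧ Function.Surjective p ∧ (∀ w, p w = 0 ↔ w ∈ Set.range i)

/-- The product on `B × V` induced by a non-abelian (2,3)-cocycle:
`(x+a)*(y+b) = x*y + ν(x,y) + μ(x)b − μ(y)a + a*b`. -/
def ceMul {B V : Type*} [AddCommGroup V]
    (mulB : B → B → B) (mulV : V → V → V) (ν : B → B → V) (μ : B → V → V) :
    B × V → B × V → B × V :=
  fun p q => (mulB p.1 q.1, ν p.1 q.1 + μ p.1 q.2 - μ q.1 p.2 + mulV p.2 q.2)

/-- The bracket on `B × V` induced by a non-abelian (2,3)-cocycle: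
`[x+a,y+b,z+c] = [x,y,z] + ω(x,y,z) + D(x,y)c + θ(y,z)a − θ(x,z)b + [a,b,c]`. -/
def ceTri {B V : Type*} [AddCommGroup V]
    (triB : B → B → B → B) (triV : V → V → V → V) (ω : B → B → B → V)
    (θ : B → B → V → V) (D : B → B → V → V) : B × V → B × V → B × V → B × V :=
  fun p q r => (triB p.1 q.1 r.1,
    ω p.1 q.1 r.1 + D p.1 q.1 r.2 + θ q.1 r.1 p.2 - θ p.1 r.1 q.2 + triV p.2 q.2 r.2)

/-- A pair `(α, β)` is inducible with respect to the extension `(i, p)` if there is a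
Bol algebra automorphism `γ` of the middle term with `γ(V) = V`, `γ∘i = i∘β`, `p∘γ = α∘p`. -/
def Inducible (k : Type*) [Field k] {V H B : Type*} [AddCommGroup V] [Module k V]
    [AddCommGroup H] [Module k H] [AddCommGroup B] [Module k B]
    (mulH : H → H → H) (triH : H → H → H → H)
    (i : V → H) (p : H → B) (α : B → B) (β : V → V) : Prop :=
  ∃ γ : H → H, IsBolHom k mulH triH mulH triH γ ∧ Function.Bijective γ ∧
    γ '' Set.range i = Set.range i ∧ (∀ a, γ (i a) = i (β a)) ∧ (∀ w, p (γ w) = α (p w))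

/-- Membership in `Aut_V(B̂)`: a Bol algebra automorphism `γ` of `H` with `γ(V) = V`. -/
def IsAutV (k : Type*) [Field k] {V H : Type*} [AddCommGroup V] [Module k V]
    [AddCommGroup H] [Module k H]
    (mulH : H → H → H) (triH : H → H → H → H) (i : V → H) (γ : H → H) : Prop :=
  IsBolHom k mulH triH mulH triH γ ∧ Function.Bijective γ ∧ γ '' Set.range i = Set.range i

/-- Membership in the group `Z¹_nab(B,V)` of non-abelian 1-cocycles. -/
def MemZ1 (k : Type*) [Field k] {B V : Type*} [AddCommGroup B] [Module k B]
    [AddCommGroup V] [Module k V]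
    (mulB : B → B → B) (triB : B → B → B → B)
    (mulV : V → V → V) (triV : V → V → V → V)
    (μ : B → V → V) (θ : B → B → V → V) (D : B → B → V → V) (φ : B → V) : Prop :=
  IsLinearMap k φ ∧
  (∀ a x, mulV a (φ x) = 0) ∧
  (∀ a b x, triV a (φ x) b = 0) ∧
  (∀ a b x, triV b a (φ x) = 0) ∧
  (∀ x y, μ x (φ y) - μ y (φ x) = φ (mulB x y) + mulV (φ x) (φ y)) ∧
  (∀ x y z, θ x z (φ y) - θ y z (φ x) - D x y (φ z) = triV (φ x) (φ y) (φ z) - φ (triB x y z))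

/-- Membership in `H¹(B,V)` for a representation `(μ, θ, D)` of `B` on `V`. -/
def MemH1 (k : Type*) [Field k] {B V : Type*} [AddCommGroup B] [Module k B]
    [AddCommGroup V] [Module k V]
    (mulB : B → B → B) (triB : B → B → B → B)
    (μ : B → V → V) (θ : B → B → V → V) (D : B → B → V → V) (φ : B → V) : Prop :=
  IsLinearMap k φ ∧
  (∀ x y, μ x (φ y) - μ y (φ x) = φ (mulB x y)) ∧
  (∀ x y z, θ x z (φ y) - θ y z (φ x) - D x y (φ z) = - φ (triB x y z))

/-- A (2,3)-cocycle of a Bol algebra `B` with coefficients in a representation `(V, μ, θ, D)`. -/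
def Is23Cocycle (k : Type*) [Field k] {B V : Type*} [AddCommGroup B] [Module k B]
    [AddCommGroup V] [Module k V]
    (mulB : B → B → B) (triB : B → B → B → B)
    (μ : B → V → V) (θ : B → B → V → V) (D : B → B → V → V)
    (ν : B → B → V) (ω : B → B → B → V) : Prop :=
  IsBilinMap k ν ∧ (∀ x y, ν x y = - ν y x) ∧
  IsTrilinMap k ω ∧ (∀ x y z, ω x y z = - ω y x z) ∧
  (∀ x1 x2 x3, ω x1 x2 x3 + ω x2 x3 x1 + ω x3 x1 x2 = 0) ∧
  (∀ x1 x2 y1 y2, ω x1 x2 (mulB y1 y2) + D x1 x2 (ν y1 y2)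
      = ω y1 y2 (mulB x1 x2) + D y1 y2 (ν x1 x2) + ν (triB x1 x2 y1) y2
        + ν y1 (triB x1 x2 y2) + μ y1 (ω x1 x2 y2) - μ y2 (ω x1 x2 y1)
        + μ (mulB x1 x2) (ν y1 y2) - μ (mulB y1 y2) (ν x1 x2)
        - ν (mulB y1 y2) (mulB x1 x2)) ∧
  (∀ x1 x2 y1 y2 y3, ω x1 x2 (triB y1 y2 y3) + D x1 x2 (ω y1 y2 y3)
      = ω (triB x1 x2 y1) y2 y3 + ω y1 (triB x1 x2 y2) y3 + ω y1 y2 (triB x1 x2 y3)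
        + D y1 y2 (ω x1 x2 y3) + θ y2 y3 (ω x1 x2 y1) - θ y1 y3 (ω x1 x2 y2))

/-- The pair `(ν, ω)` is a (2,3)-coboundary for the representation `(μ, θ, D)`. -/
def IsCoboundary (k : Type*) [Field k] {B V : Type*} [AddCommGroup B] [Module k B]
    [AddCommGroup V] [Module k V]
    (mulB : B → B → B) (triB : B → B → B → B)
    (μ : B → V → V) (θ : B → B → V → V) (D : B → B → V → V)
    (ν : B → B → V) (ω : B → B → B → V) : Prop :=
  ∃ f : B → V, IsLinearMap k f ∧ ∃ χ : V,
    (∀ x1 x2, ν x1 x2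
        = μ x1 (f x2) - μ x2 (f x1) + D x1 x2 χ - μ (mulB x1 x2) χ - f (mulB x1 x2)) ∧
    (∀ x1 x2 x3, ω x1 x2 x3
        = θ x2 x3 (f x1) - θ x1 x3 (f x2) + D x1 x2 (f x3) - f (triB x1 x2 x3))

private lemma cancel1' {V : Type*} [AddCommGroup V] {a b c d : V} (h : c = d)
    (h' : a - b = c - d) : a = b := by
  rw [h, sub_self] at h'; exact sub_eq_zero.mp h'

private lemma cancel3' {V : Type*} [AddCommGroup V] {a b c1 d1 c2 d2 c3 d3 : V}
    (h1 : c1 = d1) (h2 : c2 = d2) (h3 : c3 = d3)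
    (h' : a - b = (c1 - d1) + (c2 - d2) + (c3 - d3)) : a = b := by
  rw [h1, h2, h3, sub_self, sub_self, sub_self, add_zero, add_zero] at h'
  exact sub_eq_zero.mp h'

private lemma cancel4' {V : Type*} [AddCommGroup V] {a b c1 d1 c2 d2 c3 d3 c4 d4 : V}
    (h1 : c1 = d1) (h2 : c2 = d2) (h3 : c3 = d3) (h4 : c4 = d4)
    (h' : a - b = (c1 - d1) + (c2 - d2) + (c3 - d3) + (c4 - d4)) : a = b := by
  rw [h1, h2, h3, h4, sub_self, sub_self, sub_self, sub_self,
    add_zero, add_zero, add_zero] at h'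
  exact sub_eq_zero.mp h'

private lemma cancel5' {V : Type*} [AddCommGroup V] {a b c1 d1 c2 d2 c3 d3 c4 d4 c5 d5 : V}
    (h1 : c1 = d1) (h2 : c2 = d2) (h3 : c3 = d3) (h4 : c4 = d4) (h5 : c5 = d5)
    (h' : a - b = (c1 - d1) + (c2 - d2) + (c3 - d3) + (c4 - d4) + (c5 - d5)) : a = b := by
  rw [h1, h2, h3, h4, h5, sub_self, sub_self, sub_self, sub_self, sub_self,
    add_zero, add_zero, add_zero, add_zero] at h'
  exact sub_eq_zero.mp h'

/-- `(V, μ, θ, D)` is a representation of the Bol algebra `B` iff the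
semidirect sum operations make `B ⊕ V` a Bol algebra. -/
theorem representation_iff_semidirect_bol
    (k : Type*) [Field k] {B V : Type*} [AddCommGroup B] [Module k B]
    [AddCommGroup V] [Module k V]
    (hchar2 : (2 : k) ≠ 0) (hchar3 : (3 : k) ≠ 0)
    (mulB : B → B → B) (triB : B → B → B → B) (hB : IsBolAlg k mulB triB)
    (μ : B → V → V) (θ : B → B → V → V) (D : B → B → V → V)
    (hμ : IsBilinMap k μ) (hθ : IsTrilinMap k θ) (hD : IsTrilinMap k D) :
    IsBolRep k mulB triB μ θ D ↔
      IsBolAlg k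
        (fun p q : B × V => (mulB p.1 q.1, μ p.1 q.2 - μ q.1 p.2))
        (fun p q r : B × V =>
          (triB p.1 q.1 r.1, θ q.1 r.1 p.2 - θ p.1 r.1 q.2 + D p.1 q.1 r.2)) := by
  obtain ⟨⟨hBm1, hBm2⟩, ⟨hBt1, hBt2, hBt3⟩, hmsk, htsk, hcycB, hb6, hb7⟩ := hB
  have μ0 : ∀ x, μ x (0:V) = 0 := fun x => (hμ.1 x).map_zero
  have μadd : ∀ x (a b : V), μ x (a + b) = μ x a + μ x b := fun x a b => (hμ.1 x).map_add a b
  have μsub : ∀ x (a b : V), μ x (a - b) = μ x a - μ x b := fun x a b => (hμ.1 x).map_sub a b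
  have μneg : ∀ x (a : V), μ x (-a) = - μ x a := fun x a => (hμ.1 x).map_neg a
  have μsmul : ∀ x (c : k) (a : V), μ x (c • a) = c • μ x a := fun x c a => (hμ.1 x).map_smul c a
  have μaddl : ∀ x y (a : V), μ (x + y) a = μ x a + μ y a := fun x y a => (hμ.2 a).map_add x y
  have μsmull : ∀ (c : k) x (a : V), μ (c • x) a = c • μ x a := fun c x a => (hμ.2 a).map_smul c x
  have θ0 : ∀ x y, θ x y (0:V) = 0 := fun x y => (hθ.1 x y).map_zero
  have θadd : ∀ x y (a b : V), θ x y (a + b) = θ x y a + θ x y b :=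
    fun x y a b => (hθ.1 x y).map_add a b
  have θsub : ∀ x y (a b : V), θ x y (a - b) = θ x y a - θ x y b :=
    fun x y a b => (hθ.1 x y).map_sub a b
  have θneg : ∀ x y (a : V), θ x y (-a) = - θ x y a := fun x y a => (hθ.1 x y).map_neg a
  have θsmul : ∀ x y (c : k) (a : V), θ x y (c • a) = c • θ x y a :=
    fun x y c a => (hθ.1 x y).map_smul c a
  have θadd2 : ∀ x y y' (a : V), θ x (y + y') a = θ x y a + θ x y' a :=
    fun x y y' a => (hθ.2.1 x a).map_add y y'
  have θsmul2 : ∀ x (c : k) y (a : V), θ x (c • y) a = c • θ x y a :=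
    fun x c y a => (hθ.2.1 x a).map_smul c y
  have θadd1 : ∀ x x' y (a : V), θ (x + x') y a = θ x y a + θ x' y a :=
    fun x x' y a => (hθ.2.2 y a).map_add x x'
  have θsmul1 : ∀ (c : k) x y (a : V), θ (c • x) y a = c • θ x y a :=
    fun c x y a => (hθ.2.2 y a).map_smul c x
  have D0 : ∀ x y, D x y (0:V) = 0 := fun x y => (hD.1 x y).map_zero
  have Dadd : ∀ x y (a b : V), D x y (a + b) = D x y a + D x y b :=
    fun x y a b => (hD.1 x y).map_add a b
  have Dsub : ∀ x y (a b : V), D x y (a - b) = D x y a - D x y b :=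
    fun x y a b => (hD.1 x y).map_sub a b
  have Dneg : ∀ x y (a : V), D x y (-a) = - D x y a := fun x y a => (hD.1 x y).map_neg a
  have Dsmul : ∀ x y (c : k) (a : V), D x y (c • a) = c • D x y a :=
    fun x y c a => (hD.1 x y).map_smul c a
  have Dadd2 : ∀ x y y' (a : V), D x (y + y') a = D x y a + D x y' a :=
    fun x y y' a => (hD.2.1 x a).map_add y y'
  have Dsmul2 : ∀ x (c : k) y (a : V), D x (c • y) a = c • D x y a :=
    fun x c y a => (hD.2.1 x a).map_smul c y
  have Dadd1 : ∀ x x' y (a : V), D (x + x') y a = D x y a + D x' y a :=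
    fun x x' y a => (hD.2.2 y a).map_add x x'
  have Dsmul1 : ∀ (c : k) x y (a : V), D (c • x) y a = c • D x y a :=
    fun c x y a => (hD.2.2 y a).map_smul c x
  constructor
  · rintro ⟨-, -, -, ra1, ra2, ra3, ra4, ra5, ra6⟩
    have hDsk : ∀ x y (a : V), D x y a = - D y x a := by
      intro x y a
      refine cancel1' (c := (D x y a + θ x y a - θ y x a) + (D y x a + θ y x a - θ x y a))
        (d := 0 + 0) ?_ (by abel)
      rw [ra1 x y a, ra1 y x a]
    refine ⟨⟨?_, ?_⟩, ⟨?_, ?_, ?_⟩, ?_, ?_, ?_, ?_, ?_⟩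
    · intro p
      constructor
      · intro q q'
        refine Prod.ext_iff.mpr ⟨?_, ?_⟩
        · simp [(hBm1 p.1).map_add]
        · simp only [Prod.fst_add, Prod.snd_add, μadd, μaddl]
          try abel
      · intro c q
        refine Prod.ext_iff.mpr ⟨?_, ?_⟩
        · simp [(hBm1 p.1).map_smul]
        · simp only [Prod.smul_fst, Prod.smul_snd, μsmul, μsmull, smul_sub]
          try abel
    · intro q
      constructor
      · intro p p'
        refine Prod.ext_iff.mpr ⟨?_, ?_⟩
        · simp [(hBm2 q.1).map_add]
        · simp only [Prod.fst_add, Prod.snd_add, μadd, μaddl]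
          try abel
      · intro c p
        refine Prod.ext_iff.mpr ⟨?_, ?_⟩
        · simp [(hBm2 q.1).map_smul]
        · simp only [Prod.smul_fst, Prod.smul_snd, μsmul, μsmull, smul_sub]
          try abel
    · intro p q
      constructor
      · intro r r'
        refine Prod.ext_iff.mpr ⟨?_, ?_⟩
        · simp [(hBt1 p.1 q.1).map_add]
        · simp only [Prod.fst_add, Prod.snd_add, θadd2, θadd, Dadd]
          try abel
      · intro c r
        refine Prod.ext_iff.mpr ⟨?_, ?_⟩
        · simp [(hBt1 p.1 q.1).map_smul]
        · simp only [Prod.smul_fst, Prod.smul_snd, θsmul2, θsmul, Dsmul, smul_sub, smul_add]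
          try abel
    · intro p r
      constructor
      · intro q q'
        refine Prod.ext_iff.mpr ⟨?_, ?_⟩
        · simp [(hBt2 p.1 r.1).map_add]
        · simp only [Prod.fst_add, Prod.snd_add, θadd1, θadd, Dadd2]
          try abel
      · intro c q
        refine Prod.ext_iff.mpr ⟨?_, ?_⟩
        · simp [(hBt2 p.1 r.1).map_smul]
        · simp only [Prod.smul_fst, Prod.smul_snd, θsmul1, θsmul, Dsmul2, smul_sub, smul_add]
          try abel
    · intro q r
      constructor
      · intro p p'
        refine Prod.ext_iff.mpr ⟨?_, ?_⟩
        · simp [(hBt3 q.1 r.1).map_add]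
        · simp only [Prod.fst_add, Prod.snd_add, θadd, θadd1, Dadd1]
          try abel
      · intro c p
        refine Prod.ext_iff.mpr ⟨?_, ?_⟩
        · simp [(hBt3 q.1 r.1).map_smul]
        · simp only [Prod.smul_fst, Prod.smul_snd, θsmul, θsmul1, Dsmul1, smul_sub, smul_add]
          try abel
    · intro p q
      refine Prod.ext_iff.mpr ⟨?_, ?_⟩
      · simpa using hmsk p.1 q.1
      · simp only [Prod.fst_neg, Prod.snd_neg]
        abel
    · intro p q r
      refine Prod.ext_iff.mpr ⟨?_, ?_⟩
      · simpa using htsk p.1 q.1 r.1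
      · simp only [Prod.fst_neg, Prod.snd_neg]
        exact cancel1' (hDsk p.1 q.1 r.2) (by abel)
    · intro p q r
      refine Prod.ext_iff.mpr ⟨?_, ?_⟩
      · simpa using hcycB p.1 q.1 r.1
      · simp only [Prod.fst_add, Prod.snd_add, Prod.snd_zero]
        exact cancel3' (ra1 q.1 r.1 p.2) (ra1 r.1 p.1 q.2) (ra1 p.1 q.1 r.2) (by abel)
    · intro x1 x2 y1 y2
      refine Prod.ext_iff.mpr ⟨?_, ?_⟩
      · simpa using hb6 x1.1 x2.1 y1.1 y2.1
      · simp only [Prod.fst_add, Prod.snd_add, Prod.fst_sub, Prod.snd_sub,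
          μadd, μsub, θadd, θsub, Dadd, Dsub]
        exact cancel4' (ra3 x2.1 y1.1 y2.1 x1.2) (ra3 x1.1 y1.1 y2.1 x2.2).symm
          (ra2 x1.1 x2.1 y1.1 y2.2) (ra2 x1.1 x2.1 y2.1 y1.2).symm (by abel)
    · intro x1 x2 y1 y2 y3
      refine Prod.ext_iff.mpr ⟨?_, ?_⟩
      · simpa using hb7 x1.1 x2.1 y1.1 y2.1 y3.1
      · simp only [Prod.fst_add, Prod.snd_add, Prod.fst_sub, Prod.snd_sub,
          μadd, μsub, θadd, θsub, Dadd, Dsub]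
        exact cancel5' (ra6 x2.1 y1.1 y2.1 y3.1 x1.2) (ra6 x1.1 y1.1 y2.1 y3.1 x2.2).symm
          (ra5 x1.1 x2.1 y2.1 y3.1 y1.2) (ra5 x1.1 x2.1 y1.1 y3.1 y2.2).symm
          (ra4 x1.1 x2.1 y1.1 y2.1 y3.2) (by abel)
  · intro hA
    obtain ⟨-, -, -, -, hcy, h6, h7⟩ := hA
    refine ⟨hμ, hθ, hD, ?_, ?_, ?_, ?_, ?_, ?_⟩
    · intro x1 x2 a
      have h := congrArg Prod.snd (hcy (x1, a) (x1, 0) (x2, 0))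
      simp only [Prod.snd_add, Prod.snd_sub, Prod.snd_neg, Prod.snd_zero, μ0, θ0, D0,
        μneg, θneg, Dneg, sub_zero, zero_sub, add_zero, zero_add, sub_self, neg_zero,
        neg_neg] at h
      exact cancel1' h (by abel)
    · intro x1 x2 y1 a
      have h := congrArg Prod.snd (h6 (x1, (0:V)) (x2, 0) (y1, 0) (y1, a))
      simp only [Prod.snd_add, Prod.snd_sub, Prod.snd_neg, Prod.snd_zero, μ0, θ0, D0,
        μneg, θneg, Dneg, sub_zero, zero_sub, add_zero, zero_add, sub_self, neg_zero,
        neg_neg] at h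
      exact cancel1' h (by abel)
    · intro x1 y1 y2 a
      have h := congrArg Prod.snd (h6 (x1, a) (x1, 0) (y1, 0) (y2, 0))
      simp only [Prod.snd_add, Prod.snd_sub, Prod.snd_neg, Prod.snd_zero, μ0, θ0, D0,
        μneg, θneg, Dneg, sub_zero, zero_sub, add_zero, zero_add, sub_self, neg_zero,
        neg_neg] at h
      exact cancel1' h (by abel)
    · intro x1 x2 y1 y2 a
      have h := congrArg Prod.snd (h7 (x1, (0:V)) (x2, 0) (y1, 0) (y2, 0) (y1, a))
      simp only [Prod.snd_add, Prod.snd_sub, Prod.snd_neg, Prod.snd_zero, μ0, θ0, D0,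
        μneg, θneg, Dneg, sub_zero, zero_sub, add_zero, zero_add, sub_self, neg_zero,
        neg_neg] at h
      exact cancel1' h (by abel)
    · intro x1 x2 y1 y2 a
      have h := congrArg Prod.snd (h7 (x1, (0:V)) (x2, 0) (y1, a) (y1, 0) (y2, 0))
      simp only [Prod.snd_add, Prod.snd_sub, Prod.snd_neg, Prod.snd_zero, μ0, θ0, D0,
        μneg, θneg, Dneg, sub_zero, zero_sub, add_zero, zero_add, sub_self, neg_zero,
        neg_neg] at h
      exact cancel1' h (by abel)
    · intro x1 y1 y2 y3 a
      have h := congrArg Prod.snd (h7 (x1, a) (x1, 0) (y1, 0) (y2, 0) (y3, 0))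
      simp only [Prod.snd_add, Prod.snd_sub, Prod.snd_neg, Prod.snd_zero, μ0, θ0, D0,
        μneg, θneg, Dneg, sub_zero, zero_sub, add_zero, zero_add, sub_self, neg_zero,
        neg_neg] at h
      exact cancel1' h (by abel)
end

section
/- Let E1: 0 → V →(i1) B̂1 →(p1) B → 0 and E2: 0 → V →(i2) B̂2 →(p2) B → 0 be non-abelian extensions of a Bol algebra B by a Bol algebra V that are equivalent via a Bol algebra homomorphism f: B̂1 → B̂2 (so f∘i1 = i2 and p2∘f = p1). If s1 is a section of p1, then s2 := f∘s1 is a section of p2, and the non-abelian (2,3)-cocycles induced by s1 and by s2 coincide: ν_{s1} = ν_{s2}, ω_{s1} = ω_{s2}, μ_{s1} = μ_{s2}, θ_{s1} = θ_{s2}, D_{s1} = D_{s2} (identifying V with its images in B̂1 and B̂2). -/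
/-- equivalent non-abelian extensions induce equal non-abelian
(2,3)-cocycles: if `s1` is a section of `p1` then `s2 = f ∘ s1` is a section of `p2`
and the induced cocycles coincide. -/
theorem equivalent_extensions_give_equal_cocycles
    (k : Type*) [Field k] {V H1 H2 B : Type*} [AddCommGroup V] [Module k V]
    [AddCommGroup H1] [Module k H1] [AddCommGroup H2] [Module k H2]
    [AddCommGroup B] [Module k B]
    (hchar2 : (2 : k) ≠ 0) (hchar3 : (3 : k) ≠ 0)
    (mulV : V → V → V) (triV : V → V → V → V) (hV : IsBolAlg k mulV triV)
    (mulH1 : H1 → H1 → H1) (triH1 : H1 → H1 → H1 → H1) (hH1 : IsBolAlg k mulH1 triH1)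
    (mulH2 : H2 → H2 → H2) (triH2 : H2 → H2 → H2 → H2) (hH2 : IsBolAlg k mulH2 triH2)
    (mulB : B → B → B) (triB : B → B → B → B) (hB : IsBolAlg k mulB triB)
    (i1 : V → H1) (p1 : H1 → B)
    (hext1 : IsNAExt k mulV triV mulH1 triH1 mulB triB i1 p1)
    (i2 : V → H2) (p2 : H2 → B)
    (hext2 : IsNAExt k mulV triV mulH2 triH2 mulB triB i2 p2)
    (f : H1 → H2) (hf : IsBolHom k mulH1 triH1 mulH2 triH2 f)
    (hfi : ∀ a, f (i1 a) = i2 a) (hfp : ∀ w, p2 (f w) = p1 w)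
    (s1 : B → H1) (hs1 : IsLinearMap k s1) (hsec1 : ∀ x, p1 (s1 x) = x)
    (ν1 : B → B → V) (ω1 : B → B → B → V)
    (μ1 : B → V → V) (θ1 : B → B → V → V) (D1 : B → B → V → V)
    (hν1 : ∀ x y, i1 (ν1 x y) = mulH1 (s1 x) (s1 y) - s1 (mulB x y))
    (hω1 : ∀ x y z, i1 (ω1 x y z) = triH1 (s1 x) (s1 y) (s1 z) - s1 (triB x y z))
    (hμ1 : ∀ x a, i1 (μ1 x a) = mulH1 (s1 x) (i1 a))
    (hθ1 : ∀ x y a, i1 (θ1 x y a) = triH1 (i1 a) (s1 x) (s1 y))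
    (hD1 : ∀ x y a, i1 (D1 x y a) = triH1 (s1 x) (s1 y) (i1 a))
    (ν2 : B → B → V) (ω2 : B → B → B → V)
    (μ2 : B → V → V) (θ2 : B → B → V → V) (D2 : B → B → V → V)
    (hν2 : ∀ x y, i2 (ν2 x y) = mulH2 (f (s1 x)) (f (s1 y)) - f (s1 (mulB x y)))
    (hω2 : ∀ x y z,
      i2 (ω2 x y z) = triH2 (f (s1 x)) (f (s1 y)) (f (s1 z)) - f (s1 (triB x y z)))
    (hμ2 : ∀ x a, i2 (μ2 x a) = mulH2 (f (s1 x)) (i2 a))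
    (hθ2 : ∀ x y a, i2 (θ2 x y a) = triH2 (i2 a) (f (s1 x)) (f (s1 y)))
    (hD2 : ∀ x y a, i2 (D2 x y a) = triH2 (f (s1 x)) (f (s1 y)) (i2 a)) :
    (∀ x, p2 (f (s1 x)) = x) ∧
      ν1 = ν2 ∧ ω1 = ω2 ∧ μ1 = μ2 ∧ θ1 = θ2 ∧ D1 = D2 := by
  obtain ⟨-, -, hi2inj, -, -⟩ := hext2
  obtain ⟨hflin, hfmul, hftri⟩ := hf
  have hfsub : ∀ a b : H1, f (a - b) = f a - f b := fun a b => by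
    rw [sub_eq_add_neg, sub_eq_add_neg, hflin.map_add, hflin.map_neg]
  refine ⟨fun x => by rw [hfp, hsec1], ?_, ?_, ?_, ?_, ?_⟩
  · funext x y
    apply hi2inj
    rw [hν2, ← hfi, hν1, hfsub, hfmul]
  · funext x y z
    apply hi2inj
    rw [hω2, ← hfi, hω1, hfsub, hftri]
  · funext x a
    apply hi2inj
    rw [hμ2, ← hfi, hμ1, hfmul, hfi]
  · funext x y a
    apply hi2inj
    rw [hθ2, ← hfi, hθ1, hftri, hfi]
  · funext x y a
    apply hi2inj
    rw [hD2, ← hfi, hD1, hftri, hfi]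
end

section
/- Let B and V be Bol algebras, (ν,ω,μ,θ,D) a non-abelian (2,3)-cocycle on B with values in V, and (α,β) ∈ Aut(B)×Aut(V) a pair of Bol algebra automorphisms. Then the (α,β)-twist (ν,ω,μ,θ,D)_{(α,β)} is again a non-abelian (2,3)-cocycle on B with values in V. -/
private lemma linComp3 (k : Type*) [Field k] {M N P Q : Type*} [AddCommGroup M] [Module k M]
    [AddCommGroup N] [Module k N] [AddCommGroup P] [Module k P] [AddCommGroup Q] [Module k Q]
    {f : M → N} {g : N → P} {h : P → Q}
    (hf : IsLinearMap k f) (hg : IsLinearMap k g) (hh : IsLinearMap k h) :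
    IsLinearMap k fun x => h (g (f x)) :=
  ⟨fun a b => by rw [hf.map_add, hg.map_add, hh.map_add],
   fun c a => by rw [hf.map_smul, hg.map_smul, hh.map_smul]⟩

/-- the `(α, β)`-twist of a non-abelian (2,3)-cocycle is again a
non-abelian (2,3)-cocycle. -/
theorem twist_of_nonabelian_cocycle_is_cocycle
    (k : Type*) [Field k] {B V : Type*} [AddCommGroup B] [Module k B]
    [AddCommGroup V] [Module k V]
    (hchar2 : (2 : k) ≠ 0) (hchar3 : (3 : k) ≠ 0)
    (mulB : B → B → B) (triB : B → B → B → B) (hB : IsBolAlg k mulB triB)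
    (mulV : V → V → V) (triV : V → V → V → V) (hV : IsBolAlg k mulV triV)
    (ν : B → B → V) (ω : B → B → B → V)
    (μ : B → V → V) (θ : B → B → V → V) (D : B → B → V → V)
    (hcoc : IsNACocycle k mulB triB mulV triV ν ω μ θ D)
    (α α' : B → B) (hα : IsBolHom k mulB triB mulB triB α)
    (hαbij : Function.Bijective α)
    (hα'l : Function.LeftInverse α' α) (hα'r : Function.RightInverse α' α)
    (β β' : V → V) (hβ : IsBolHom k mulV triV mulV triV β)
    (hβbij : Function.Bijective β)
    (hβ'l : Function.LeftInverse β' β) (hβ'r : Function.RightInverse β' β) :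
    IsNACocycle k mulB triB mulV triV
      (fun x y => β (ν (α' x) (α' y)))
      (fun x y z => β (ω (α' x) (α' y) (α' z)))
      (fun x a => β (μ (α' x) (β' a)))
      (fun x y a => β (θ (α' x) (α' y) (β' a)))
      (fun x y a => β (D (α' x) (α' y) (β' a))) := by
  obtain ⟨hαlin, hαmul, hαtri⟩ := hα
  obtain ⟨hβlin, hβmul, hβtri⟩ := hβ
  have hα'lin : IsLinearMap k α' :=
    ⟨fun u v => hαbij.1 (by rw [hα'r, hαlin.map_add, hα'r, hα'r]),
     fun c u => hαbij.1 (by rw [hα'r, hαlin.map_smul, hα'r])⟩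
  have hβ'lin : IsLinearMap k β' :=
    ⟨fun u v => hβbij.1 (by rw [hβ'r, hβlin.map_add, hβ'r, hβ'r]),
     fun c u => hβbij.1 (by rw [hβ'r, hβlin.map_smul, hβ'r])⟩
  have hα'mul : ∀ u v, α' (mulB u v) = mulB (α' u) (α' v) :=
    fun u v => hαbij.1 (by rw [hα'r, hαmul, hα'r, hα'r])
  have hα'tri : ∀ u v w, α' (triB u v w) = triB (α' u) (α' v) (α' w) :=
    fun u v w => hαbij.1 (by rw [hα'r, hαtri, hα'r, hα'r, hα'r])
  have hβ'mul : ∀ u v, β' (mulV u v) = mulV (β' u) (β' v) :=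
    fun u v => hβbij.1 (by rw [hβ'r, hβmul, hβ'r, hβ'r])
  have hβ'tri : ∀ u v w, β' (triV u v w) = triV (β' u) (β' v) (β' w) :=
    fun u v w => hβbij.1 (by rw [hβ'r, hβtri, hβ'r, hβ'r, hβ'r])
  have hba : ∀ a b, β (a + b) = β a + β b := hβlin.map_add
  have hbn : ∀ a, β (-a) = -β a := fun a => by
    rw [← neg_one_smul k a, hβlin.map_smul, neg_one_smul]
  have hbs : ∀ a b, β (a - b) = β a - β b := fun a b => by
    rw [sub_eq_add_neg, hba, hbn, sub_eq_add_neg]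
  have hb0 : β 0 = 0 := by
    have h := hβlin.map_smul 0 0; rwa [zero_smul, zero_smul] at h
  have hbb' : ∀ a, β (β' a) = a := hβ'r
  have hb'b : ∀ a, β' (β a) = a := hβ'l
  constructor
  · exact ⟨fun x => linComp3 k hα'lin (hcoc.ν_bilin.1 (α' x)) hβlin,
      fun y => linComp3 k hα'lin (hcoc.ν_bilin.2 (α' y)) hβlin⟩
  · intro x y; rw [hcoc.ν_skew, hbn]
  · exact ⟨fun x y => linComp3 k hα'lin (hcoc.ω_trilin.1 (α' x) (α' y)) hβlin,
      fun x z => linComp3 k hα'lin (hcoc.ω_trilin.2.1 (α' x) (α' z)) hβlin,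
      fun y z => linComp3 k hα'lin (hcoc.ω_trilin.2.2 (α' y) (α' z)) hβlin⟩
  · intro x y z; rw [hcoc.ω_skew, hbn]
  · exact ⟨fun x => linComp3 k hβ'lin (hcoc.μ_bilin.1 (α' x)) hβlin,
      fun a => linComp3 k hα'lin (hcoc.μ_bilin.2 (β' a)) hβlin⟩
  · exact ⟨fun x y => linComp3 k hβ'lin (hcoc.θ_trilin.1 (α' x) (α' y)) hβlin,
      fun x a => linComp3 k hα'lin (hcoc.θ_trilin.2.1 (α' x) (β' a)) hβlin,
      fun y a => linComp3 k hα'lin (hcoc.θ_trilin.2.2 (α' y) (β' a)) hβlin⟩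
  · exact ⟨fun x y => linComp3 k hβ'lin (hcoc.D_trilin.1 (α' x) (α' y)) hβlin,
      fun x a => linComp3 k hα'lin (hcoc.D_trilin.2.1 (α' x) (β' a)) hβlin,
      fun y a => linComp3 k hα'lin (hcoc.D_trilin.2.2 (α' y) (β' a)) hβlin⟩
  · intro x y a; rw [hcoc.D_skew, hbn]
  · intro x y z
    have h := congrArg β (hcoc.ω_cyclic (α' x) (α' y) (α' z))
    simpa only [hba, hb0] using h
  · intro x y a
    have h := congrArg β (hcoc.Dθ_rel (α' x) (α' y) (β' a))
    simpa only [hba, hbs, hb0] using h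
  · intro x y z w
    have h := congrArg β (hcoc.eqB22 (α' x) (α' y) (α' z) (α' w))
    simp only [hba, hbs] at h
    simpa only [hb'b, hα'mul, hα'tri] using h
  · intro x y z a
    have h := congrArg β (hcoc.eqB23 (α' x) (α' y) (α' z) (β' a))
    simp only [hba, hβmul, hbb'] at h
    simpa only [hb'b, hα'mul, hα'tri] using h
  · intro x y a b
    have h := congrArg β (hcoc.eqB24 (α' x) (α' y) (β' a) (β' b))
    simp only [hba, hβmul, hβtri, hbb'] at h
    simpa only [hb'b, hα'mul, hβ'mul] using h
  · intro x y a b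
    have h := congrArg β (hcoc.eqB25 (α' x) (α' y) (β' a) (β' b))
    simp only [hba, hβmul, hβtri, hbb', hb0] at h
    simpa only [hb'b, hα'mul, hβ'mul] using h
  · intro x y z w a
    have h := congrArg β (hcoc.eqB31 (α' x) (α' y) (α' z) (α' w) (β' a))
    simp only [hba, hbs] at h
    simpa only [hb'b, hα'tri] using h
  · intro x y z a
    have h := congrArg β (hcoc.eqB32 (α' x) (α' y) (α' z) (β' a))
    simp only [hba, hbs] at h
    simpa only [hb'b, hα'mul] using h
  · intro x y z w a
    have h := congrArg β (hcoc.eqB2 (α' x) (α' y) (α' z) (α' w) (β' a))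
    simp only [hba, hbs] at h
    simpa only [hb'b, hα'tri] using h
  · intro x y z w a
    have h := congrArg β (hcoc.eqB3 (α' x) (α' y) (α' z) (α' w) (β' a))
    simp only [hba, hbs] at h
    simpa only [hb'b, hα'tri] using h
  · intro x y a b c
    have h := congrArg β (hcoc.eqB4 (α' x) (α' y) (β' a) (β' b) (β' c))
    simp only [hba, hβtri, hbb'] at h
    simpa only [hb'b, hβ'tri] using h
  · intro x1 x2 y1 y2 y3
    have h := congrArg β (hcoc.eqB1 (α' x1) (α' x2) (α' y1) (α' y2) (α' y3))
    simp only [hba, hbs] at h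
    simpa only [hb'b, hα'tri] using h
end

section
/- Let B and V be Bol algebras and let (ν,ω,μ,θ,D) and (ν',ω',μ',θ',D') be non-abelian (2,3)-cocycles on B with values in V that are equivalent via a linear map φ: B → V. Then for every pair (α,β) ∈ Aut(B)×Aut(V) of Bol algebra automorphisms, the twisted cocycles (ν',ω',μ',θ',D')_{(α,β)} and (ν,ω,μ,θ,D)_{(α,β)} are equivalent via the linear map ψ = β∘φ∘α⁻¹. Consequently, the Wells map W(α,β) = [(ν,ω,μ,θ,D)_{(α,β)} − (ν,ω,μ,θ,D)] associated with a non-abelian extension does not depend on the choice of section. -/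
/-- if two non-abelian (2,3)-cocycles are equivalent via `φ`, then their
`(α, β)`-twists are equivalent via `ψ = β ∘ φ ∘ α⁻¹`; hence the Wells map does not
depend on the choice of section. -/
theorem twists_of_equivalent_cocycles_equivalent
    (k : Type*) [Field k] {B V : Type*} [AddCommGroup B] [Module k B]
    [AddCommGroup V] [Module k V]
    (hchar2 : (2 : k) ≠ 0) (hchar3 : (3 : k) ≠ 0)
    (mulB : B → B → B) (triB : B → B → B → B) (hB : IsBolAlg k mulB triB)
    (mulV : V → V → V) (triV : V → V → V → V) (hV : IsBolAlg k mulV triV)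
    (ν : B → B → V) (ω : B → B → B → V)
    (μ : B → V → V) (θ : B → B → V → V) (D : B → B → V → V)
    (hcoc : IsNACocycle k mulB triB mulV triV ν ω μ θ D)
    (ν' : B → B → V) (ω' : B → B → B → V)
    (μ' : B → V → V) (θ' : B → B → V → V) (D' : B → B → V → V)
    (hcoc' : IsNACocycle k mulB triB mulV triV ν' ω' μ' θ' D')
    (φ : B → V)
    (hφ : CocycleEquiv k mulB triB mulV triV ν' ω' μ' θ' D' ν ω μ θ D φ)
    (α α' : B → B) (hα : IsBolHom k mulB triB mulB triB α)
    (hαbij : Function.Bijective α)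
    (hα'l : Function.LeftInverse α' α) (hα'r : Function.RightInverse α' α)
    (β β' : V → V) (hβ : IsBolHom k mulV triV mulV triV β)
    (hβbij : Function.Bijective β)
    (hβ'l : Function.LeftInverse β' β) (hβ'r : Function.RightInverse β' β) :
    CocycleEquiv k mulB triB mulV triV
      (fun x y => β (ν' (α' x) (α' y)))
      (fun x y z => β (ω' (α' x) (α' y) (α' z)))
      (fun x a => β (μ' (α' x) (β' a)))
      (fun x y a => β (θ' (α' x) (α' y) (β' a)))
      (fun x y a => β (D' (α' x) (α' y) (β' a)))
      (fun x y => β (ν (α' x) (α' y)))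
      (fun x y z => β (ω (α' x) (α' y) (α' z)))
      (fun x a => β (μ (α' x) (β' a)))
      (fun x y a => β (θ (α' x) (α' y) (β' a)))
      (fun x y a => β (D (α' x) (α' y) (β' a)))
      (fun x => β (φ (α' x))) := by

  obtain ⟨φlin, hω, hν, hμ, hθ, hD⟩ := hφ
  have βadd : ∀ a b, β (a + b) = β a + β b := hβ.1.map_add
  have βsub : ∀ a b, β (a - b) = β a - β b := fun a b =>
    eq_sub_of_add_eq (by rw [← βadd, sub_add_cancel])
  have h1 : ∀ a, β' (β a) = a := hβ'l
  have h2 : ∀ a, β (β' a) = a := hβ'r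
  have α'lin : IsLinearMap k α' := by
    constructor
    · intro x y
      apply hαbij.injective
      rw [hα'r, hα.1.map_add, hα'r, hα'r]
    · intro c x
      apply hαbij.injective
      rw [hα'r, hα.1.map_smul, hα'r]
  have α'mul : ∀ x y, α' (mulB x y) = mulB (α' x) (α' y) := fun x y =>
    hαbij.injective (by rw [hα'r, hα.2.1, hα'r, hα'r])
  have α'tri : ∀ x y z, α' (triB x y z) = triB (α' x) (α' y) (α' z) := fun x y z =>
    hαbij.injective (by rw [hα'r, hα.2.2, hα'r, hα'r, hα'r])
  constructor
  · constructor
    · intro x y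
      simp only [α'lin.map_add, φlin.map_add, hβ.1.map_add]
    · intro c x
      simp only [α'lin.map_smul, φlin.map_smul, hβ.1.map_smul]
  · intro x y z
    rw [show (β (ω' (α' x) (α' y) (α' z)) - β (ω (α' x) (α' y) (α' z)))
        = β (ω' (α' x) (α' y) (α' z) - ω (α' x) (α' y) (α' z)) from (βsub _ _).symm,
      hω]
    simp only [βadd, βsub, hβ.2.1, hβ.2.2, h1, h2, α'mul, α'tri]
  · intro x y
    rw [show (β (ν' (α' x) (α' y)) - β (ν (α' x) (α' y)))
        = β (ν' (α' x) (α' y) - ν (α' x) (α' y)) from (βsub _ _).symm,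
      hν]
    simp only [βadd, βsub, hβ.2.1, hβ.2.2, h1, h2, α'mul, α'tri]
  · intro x a
    rw [show (β (μ' (α' x) (β' a)) - β (μ (α' x) (β' a)))
        = β (μ' (α' x) (β' a) - μ (α' x) (β' a)) from (βsub _ _).symm,
      hμ]
    simp only [hβ.2.1, h1, h2]
  · intro x y a
    rw [show (β (θ' (α' x) (α' y) (β' a)) - β (θ (α' x) (α' y) (β' a)))
        = β (θ' (α' x) (α' y) (β' a) - θ (α' x) (α' y) (β' a)) from (βsub _ _).symm,
      hθ]
    simp only [hβ.2.2, h1, h2]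
  · intro x y a
    rw [show (β (D' (α' x) (α' y) (β' a)) - β (D (α' x) (α' y) (β' a)))
        = β (D' (α' x) (α' y) (β' a) - D (α' x) (α' y) (β' a)) from (βsub _ _).symm,
      hD]
    simp only [hβ.2.2, h1, h2]
end

section
/- Let 0 → V →(i) B̂ →(p) B → 0 be a non-abelian extension of a Bol algebra B by a Bol algebra V with section s of p, and let (ν,ω,μ,θ,D) be the induced non-abelian (2,3)-cocycle. For γ ∈ Aut_V^B(B̂), the map φ_γ(x) := s(x) − γ(s(x)) takes values in V and belongs to Z¹_nab(B,V), and the map S: Aut_V^B(B̂) → Z¹_nab(B,V), S(γ) = φ_γ, is a group homomorphism from (Aut_V^B(B̂), composition) to (Z¹_nab(B,V), +). -/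
/-- for `γ ∈ Aut_V^B(B̂)`, the map `φ_γ(x) = s(x) − γ(s(x))` takes
values in `V` and lies in `Z¹_nab(B,V)`, and `S(γ) = φ_γ` is a group homomorphism. -/
theorem S_is_group_homomorphism
    (k : Type*) [Field k] {V H B : Type*} [AddCommGroup V] [Module k V]
    [AddCommGroup H] [Module k H] [AddCommGroup B] [Module k B]
    (hchar2 : (2 : k) ≠ 0) (hchar3 : (3 : k) ≠ 0)
    (mulV : V → V → V) (triV : V → V → V → V) (hV : IsBolAlg k mulV triV)
    (mulH : H → H → H) (triH : H → H → H → H) (hH : IsBolAlg k mulH triH)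
    (mulB : B → B → B) (triB : B → B → B → B) (hB : IsBolAlg k mulB triB)
    (i : V → H) (p : H → B)
    (hext : IsNAExt k mulV triV mulH triH mulB triB i p)
    (s : B → H) (hs : IsLinearMap k s) (hsec : ∀ x, p (s x) = x)
    (ν : B → B → V) (ω : B → B → B → V)
    (μ : B → V → V) (θ : B → B → V → V) (D : B → B → V → V)
    (hν : ∀ x y, i (ν x y) = mulH (s x) (s y) - s (mulB x y))
    (hω : ∀ x y z, i (ω x y z) = triH (s x) (s y) (s z) - s (triB x y z))
    (hμ : ∀ x a, i (μ x a) = mulH (s x) (i a))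
    (hθ : ∀ x y a, i (θ x y a) = triH (i a) (s x) (s y))
    (hD : ∀ x y a, i (D x y a) = triH (s x) (s y) (i a)) :
    (∀ γ : H → H, IsAutV k mulH triH i γ →
        (∀ x, p (γ (s x)) = x) → (∀ a, γ (i a) = i a) →
          (∀ x, s x - γ (s x) ∈ Set.range i) ∧
            ∀ φ : B → V, (∀ x, i (φ x) = s x - γ (s x)) →
              MemZ1 k mulB triB mulV triV μ θ D φ) ∧
      (∀ γ1 γ2 : H → H, IsAutV k mulH triH i γ1 →
          (∀ x, p (γ1 (s x)) = x) → (∀ a, γ1 (i a) = i a) →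
          IsAutV k mulH triH i γ2 →
          (∀ x, p (γ2 (s x)) = x) → (∀ a, γ2 (i a) = i a) →
          ∀ φ1 φ2 φ12 : B → V,
            (∀ x, i (φ1 x) = s x - γ1 (s x)) →
            (∀ x, i (φ2 x) = s x - γ2 (s x)) →
            (∀ x, i (φ12 x) = s x - γ1 (γ2 (s x))) →
            ∀ x, φ12 x = φ1 x + φ2 x) := by
  
  obtain ⟨hi, hp, inj, -, hker⟩ := hext
  obtain ⟨hil, himul, hitri⟩ := hi
  obtain ⟨hpl, hpmul, hptri⟩ := hp
  have pz : ∀ a, p (i a) = 0 := fun a => (hker (i a)).2 ⟨a, rfl⟩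
  have msubl : ∀ u v w : H, mulH (u - v) w = mulH u w - mulH v w :=
    fun u v w => (hH.1.2 w).map_sub u v
  have msubr : ∀ u v w : H, mulH u (v - w) = mulH u v - mulH u w :=
    fun u v w => (hH.1.1 u).map_sub v w
  have tsub1 : ∀ u v w t : H, triH (u - v) w t = triH u w t - triH v w t :=
    fun u v w t => (hH.2.1.2.2 w t).map_sub u v
  have tsub2 : ∀ u v w t : H, triH u (v - w) t = triH u v t - triH u w t :=
    fun u v w t => (hH.2.1.2.1 u t).map_sub v w
  have tsub3 : ∀ u v w t : H, triH u v (w - t) = triH u v w - triH u v t :=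
    fun u v w t => (hH.2.1.1 u v).map_sub w t
  have hcancel : ∀ m : H, m + m = 0 → m = 0 := by
    intro m hm
    have h2 : (2 : k) • m = 0 := by rw [two_smul]; exact hm
    calc m = (2 : k)⁻¹ • ((2 : k) • m) := by
            rw [smul_smul, inv_mul_cancel₀ hchar2, one_smul]
      _ = 0 := by rw [h2, smul_zero]
  constructor
  · intro γ hγ hpγ hγi
    obtain ⟨⟨hγl, hγmul, hγtri⟩, hγbij, -⟩ := hγ
    have L0 : ∀ u : H, p u = 0 → γ u = u := by
      intro u hu
      obtain ⟨a, ha⟩ := (hker u).1 hu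
      rw [← ha, hγi]
    constructor
    · intro x
      exact (hker _).1 (by rw [hpl.map_sub, hsec, hpγ, sub_self])
    · intro φ hφ
      have hγs : ∀ x, γ (s x) = s x - i (φ x) := fun x => by rw [hφ x]; abel
      have Z2 : ∀ (a : V) (x : B), mulH (i a) (i (φ x)) = 0 := by
        intro a x
        have h0 : γ (mulH (i a) (s x)) = mulH (i a) (s x) :=
          L0 _ (by rw [hpmul, pz]; exact (hB.1.2 _).map_zero)
        rw [hγmul, hγi, hγs, msubr] at h0
        exact sub_eq_self.mp h0
      have Z3b : ∀ (a : V) (x : B) (b : V), triH (i a) (i (φ x)) (i b) = 0 := by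
        intro a x b
        have h0 : γ (triH (i a) (s x) (i b)) = triH (i a) (s x) (i b) :=
          L0 _ (by rw [hptri, pz, pz]; exact (hB.2.1.2.2 _ _).map_zero)
        rw [hγtri, hγi, hγi, hγs, tsub2] at h0
        exact sub_eq_self.mp h0
      have Z3c : ∀ (b a : V) (x : B), triH (i b) (i a) (i (φ x)) = 0 := by
        intro b a x
        have h0 : γ (triH (i b) (i a) (s x)) = triH (i b) (i a) (s x) :=
          L0 _ (by rw [hptri, pz, pz]; exact (hB.2.1.2.2 _ _).map_zero)
        rw [hγtri, hγi, hγi, hγs, tsub3] at h0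
        exact sub_eq_self.mp h0
      refine ⟨⟨fun x y => ?_, fun c x => ?_⟩, fun a x => ?_, fun a b x => ?_,
        fun a b x => ?_, fun x y => ?_, fun x y z => ?_⟩
      · apply inj
        rw [hil.map_add]
        simp only [hφ, hs.map_add, hγl.map_add]
        abel
      · apply inj
        rw [hil.map_smul]
        simp only [hφ, hs.map_smul, hγl.map_smul, smul_sub]
      · apply inj
        rw [himul, Z2, hil.map_zero]
      · apply inj
        rw [hitri, Z3b, hil.map_zero]
      · apply inj
        rw [hitri, Z3c, hil.map_zero]
      · -- the μ equation
        apply inj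
        have e1 : γ (mulH (s x) (s y))
            = i (ν x y) + (s (mulB x y) - i (φ (mulB x y))) := by
          rw [show mulH (s x) (s y) = i (ν x y) + s (mulB x y) from by rw [hν]; abel,
            hγl.map_add, L0 _ (pz _), hγs]
        have e2 : γ (mulH (s x) (s y))
            = (i (ν x y) + s (mulB x y)) - i (μ x (φ y)) + i (μ y (φ x))
              + i (mulV (φ x) (φ y)) := by
          rw [hγmul, hγs, hγs]
          simp only [msubl, msubr]
          rw [hν, hμ x (φ y), hμ y (φ x), himul (φ x) (φ y),
            hH.2.2.1 (i (φ x)) (s y)]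
          abel
        rw [hil.map_sub, hil.map_add]
        linear_combination (norm := module) e2 - e1
      · -- the triple equation
        apply inj
        have hA : triH (i (φ x)) (i (φ y)) (s z) + triH (i (φ x)) (s y) (i (φ z)) = 0 := by
          have h0 : γ (triH (i (φ x)) (s y) (s z)) = triH (i (φ x)) (s y) (s z) :=
            L0 _ (by rw [hptri, pz]; exact (hB.2.1.2.2 _ _).map_zero)
          rw [hγtri, hγi, hγs, hγs] at h0
          simp only [tsub2, tsub3] at h0
          rw [Z3b (φ x) y (φ z)] at h0
          linear_combination (norm := module) -h0
        have hBB : triH (i (φ x)) (i (φ y)) (s z) + triH (s x) (i (φ y)) (i (φ z)) = 0 := by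
          have h0 : γ (triH (s x) (i (φ y)) (s z)) = triH (s x) (i (φ y)) (s z) :=
            L0 _ (by rw [hptri, pz]; exact (hB.2.1.2.1 _ _).map_zero)
          rw [hγtri, hγi, hγs, hγs] at h0
          simp only [tsub1, tsub3] at h0
          rw [Z3b (φ x) y (φ z)] at h0
          linear_combination (norm := module) -h0
        have hC : triH (i (φ x)) (s y) (i (φ z)) + triH (s x) (i (φ y)) (i (φ z)) = 0 := by
          have h0 : γ (triH (s x) (s y) (i (φ z))) = triH (s x) (s y) (i (φ z)) :=
            L0 _ (by rw [hptri, pz]; exact (hB.2.1.1 _ _).map_zero)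
          rw [hγtri, hγi, hγs, hγs] at h0
          simp only [tsub1, tsub2] at h0
          rw [Z3b (φ x) y (φ z)] at h0
          linear_combination (norm := module) -h0
        have M1 : triH (i (φ x)) (i (φ y)) (s z) = 0 :=
          hcancel _ (by linear_combination (norm := module) hA + hBB - hC)
        have M2 : triH (i (φ x)) (s y) (i (φ z)) = 0 :=
          hcancel _ (by linear_combination (norm := module) hA - hBB + hC)
        have M3 : triH (s x) (i (φ y)) (i (φ z)) = 0 :=
          hcancel _ (by linear_combination (norm := module) -hA + hBB + hC)
        have e1 : γ (triH (s x) (s y) (s z))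
            = i (ω x y z) + (s (triB x y z) - i (φ (triB x y z))) := by
          rw [show triH (s x) (s y) (s z) = i (ω x y z) + s (triB x y z) from by
              rw [hω]; abel,
            hγl.map_add, L0 _ (pz _), hγs]
        have e2 : γ (triH (s x) (s y) (s z))
            = (i (ω x y z) + s (triB x y z)) - i (θ y z (φ x)) + i (θ x z (φ y))
              - i (D x y (φ z)) := by
          rw [hγtri, hγs, hγs, hγs]
          simp only [tsub1, tsub2, tsub3]
          rw [M1, M2, M3, Z3b (φ x) y (φ z), hω, hθ y z (φ x), hθ x z (φ y),
            hD x y (φ z), hH.2.2.2.1 (s x) (i (φ y)) (s z)]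
          abel
        rw [hil.map_sub, hil.map_sub, hil.map_sub, hitri, Z3b (φ x) y (φ z)]
        linear_combination (norm := module) e1 - e2
  · intro γ1 γ2 h1 hp1 hi1 h2 hp2 hi2 φ1 φ2 φ12 hφ1 hφ2 hφ12 x
    apply inj
    rw [hφ12, hil.map_add, hφ1, hφ2,
      show γ2 (s x) = s x - i (φ2 x) from by rw [hφ2 x]; abel,
      h1.1.1.map_sub, hi1]
    abel
end

section
/- Let B be a Bol algebra with a representation (V,μ,θ,D), and let (ν,ω) be a (2,3)-cocycle of B with coefficients in V. If (α,β) ∈ C_{(B,V)}, then the twisted pair (ν,ω)_{(α,β)} defined by ν_{(α,β)}(x,y) = β(ν(α⁻¹x,α⁻¹y)) and ω_{(α,β)}(x,y,z) = β(ω(α⁻¹x,α⁻¹y,α⁻¹z)) is again a (2,3)-cocycle of B with coefficients in the representation (V,μ,θ,D). -/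
/-- for a compatible pair `(α, β) ∈ C_{(B,V)}`, the `(α, β)`-twist of a
(2,3)-cocycle of `B` with coefficients in the representation `(V, μ, θ, D)` is again a
(2,3)-cocycle with coefficients in the same representation. -/
theorem twist_of_23cocycle_is_cocycle
    (k : Type*) [Field k] {B V : Type*} [AddCommGroup B] [Module k B]
    [AddCommGroup V] [Module k V]
    (hchar2 : (2 : k) ≠ 0) (hchar3 : (3 : k) ≠ 0)
    (mulB : B → B → B) (triB : B → B → B → B) (hB : IsBolAlg k mulB triB)
    (μ : B → V → V) (θ : B → B → V → V) (D : B → B → V → V)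
    (hrep : IsBolRep k mulB triB μ θ D)
    (ν : B → B → V) (ω : B → B → B → V)
    (hcoc : Is23Cocycle k mulB triB μ θ D ν ω)
    (α α' : B → B) (hα : IsBolHom k mulB triB mulB triB α)
    (hαbij : Function.Bijective α)
    (hα'l : Function.LeftInverse α' α) (hα'r : Function.RightInverse α' α)
    (β : V → V) (hβ : IsLinearMap k β) (hβbij : Function.Bijective β)
    (hcompθ : ∀ x y a, β (θ x y a) = θ (α x) (α y) (β a))
    (hcompμ : ∀ x a, β (μ x a) = μ (α x) (β a)) :
    Is23Cocycle k mulB triB μ θ D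
      (fun x y => β (ν (α' x) (α' y)))
      (fun x y z => β (ω (α' x) (α' y) (α' z))) := by

  obtain ⟨hνbil, hνskew, hωtril, hωskew, hωcyc, heq2, heq3⟩ := hcoc
  have hDθ := hrep.2.2.2.1
  have hD : ∀ x y a, D x y a = θ y x a - θ x y a := by
    intro x y a
    have h := hDθ x y a
    have h2 : D x y a + θ x y a = θ y x a := by
      rwa [sub_eq_zero] at h
    exact eq_sub_of_add_eq h2
  have hα'lin : IsLinearMap k α' := by
    constructor
    · intro x y
      apply hαbij.1
      rw [hα'r, hα.1.map_add, hα'r, hα'r]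
    · intro c x
      apply hαbij.1
      rw [hα'r, hα.1.map_smul, hα'r]
  have hα'mul : ∀ x y, α' (mulB x y) = mulB (α' x) (α' y) := by
    intro x y
    apply hαbij.1
    rw [hα'r, hα.2.1, hα'r, hα'r]
  have hα'tri : ∀ x y z, α' (triB x y z) = triB (α' x) (α' y) (α' z) := by
    intro x y z
    apply hαbij.1
    rw [hα'r, hα.2.2, hα'r, hα'r, hα'r]
  have tμ : ∀ x a, μ x (β a) = β (μ (α' x) a) := by
    intro x a
    rw [hcompμ, hα'r]
  have tθ : ∀ x y a, θ x y (β a) = β (θ (α' x) (α' y) a) := by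
    intro x y a
    rw [hcompθ, hα'r, hα'r]
  have hcompD : ∀ x y a, β (D x y a) = D (α x) (α y) (β a) := by
    intro x y a
    rw [hD, hβ.map_sub, hcompθ, hcompθ, ← hD]
  have tD : ∀ x y a, D x y (β a) = β (D (α' x) (α' y) a) := by
    intro x y a
    rw [hcompD, hα'r, hα'r]
  refine ⟨?_, ?_, ?_, ?_, ?_, ?_, ?_⟩
  · exact ⟨fun x => ⟨fun y z => by simp only [hα'lin.map_add, (hνbil.1 _).map_add, hβ.map_add],
      fun c y => by simp only [hα'lin.map_smul, (hνbil.1 _).map_smul, hβ.map_smul]⟩,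
      fun y => ⟨fun x z => by simp only [hα'lin.map_add, (hνbil.2 _).map_add, hβ.map_add],
      fun c x => by simp only [hα'lin.map_smul, (hνbil.2 _).map_smul, hβ.map_smul]⟩⟩
  · intro x y
    dsimp only
    rw [hνskew, hβ.map_neg]
  · refine ⟨fun x y => ⟨fun z w => ?_, fun c z => ?_⟩,
      fun x z => ⟨fun y w => ?_, fun c y => ?_⟩,
      fun y z => ⟨fun x w => ?_, fun c x => ?_⟩⟩
    · simp only [hα'lin.map_add, (hωtril.1 _ _).map_add, hβ.map_add]
    · simp only [hα'lin.map_smul, (hωtril.1 _ _).map_smul, hβ.map_smul]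
    · simp only [hα'lin.map_add, (hωtril.2.1 _ _).map_add, hβ.map_add]
    · simp only [hα'lin.map_smul, (hωtril.2.1 _ _).map_smul, hβ.map_smul]
    · simp only [hα'lin.map_add, (hωtril.2.2 _ _).map_add, hβ.map_add]
    · simp only [hα'lin.map_smul, (hωtril.2.2 _ _).map_smul, hβ.map_smul]
  · intro x y z
    dsimp only
    rw [hωskew, hβ.map_neg]
  · intro x1 x2 x3
    rw [← hβ.map_add, ← hβ.map_add, hωcyc, hβ.map_zero]
  · intro x1 x2 y1 y2
    simp only [hα'mul, hα'tri, tD, tμ, tθ, ← hβ.map_add, ← hβ.map_sub]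
    exact congrArg β (heq2 _ _ _ _)
  · intro x1 x2 y1 y2 y3
    simp only [hα'mul, hα'tri, tD, tμ, tθ, ← hβ.map_add, ← hβ.map_sub]
    exact congrArg β (heq3 _ _ _ _ _)
end
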